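/- Subjective abductive explanations can fail to exist: there exists an MCM Γ = (S,Φ), a state s ∈ S and function f ∈ Φ such that for no term λ does (Γ,s,f) ⊨ □F AXp(λ, f(s)). Concretely, with Atm₀ = {si, or, cl, an}, Val = {0,1}, S = 2^Atm₀, Φ the set of all f with: f(s)=1 whenever {si,or,cl,an} ⊆ s; f monotone (s ⊂ s' and f(s)=1 imply f(s')=1); and f(s)=0 whenever an ∉ s; s₁ = {si, or, an}; and f₁(s)=1 iff an ∈ s and {or,cl} ∩ s ≠ ∅: then f₁ ∈ Φ and there is no term λ with (Γ,s₁,f₁) ⊨ □F AXp(λ,1). -/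

import Mathlib

/-- Formulas of the language L of PLC. -/
inductive Form (Atm Val : Type) : Type
  | atom : Atm → Form Atm Val
  | dec  : Val → Form Atm Val
  | neg  : Form Atm Val → Form Atm Val
  | and  : Form Atm Val → Form Atm Val → Form Atm Val
  | boxI : Form Atm Val → Form Atm Val
  | boxF : Form Atm Val → Form Atm Val

variable {Atm Val : Type}

def Form.impl (φ ψ : Form Atm Val) : Form Atm Val := .neg (.and φ (.neg ψ))

/-- Satisfaction at a pointed MCM (Γ,s,f) with Γ = (S,Φ). -/
def Sat (S : Set (Set Atm)) (Φ : Set ((Set Atm) → Val)) :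
    Set Atm → ((Set Atm) → Val) → Form Atm Val → Prop
  | s, _, .atom p => p ∈ s
  | s, f, .dec x => f s = x
  | s, f, .neg φ => ¬ Sat S Φ s f φ
  | s, f, .and φ ψ => Sat S Φ s f φ ∧ Sat S Φ s f ψ
  | _, f, .boxI φ => ∀ s' ∈ S, Sat S Φ s' f φ
  | s, _, .boxF φ => ∀ f' ∈ Φ, Sat S Φ s f' φ

/-- A valid formula used as the unit of big conjunctions. -/
def Form.tru [Inhabited Val] : Form Atm Val :=
  .neg (.and (.dec default) (.neg (.dec default)))

/-- Conjunction of a list of formulas. -/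
def bigAnd [Inhabited Val] (l : List (Form Atm Val)) : Form Atm Val :=
  l.foldr .and .tru

/-- cn(Y,X): atoms in Y positively, atoms in X \ Y negatively. -/
noncomputable def cnOn [DecidableEq Atm] [Inhabited Val] (Y X : Finset Atm) : Form Atm Val :=
  bigAnd (X.val.toList.map (fun p => if p ∈ Y then Form.atom p else .neg (.atom p)))

/-- The ceteris paribus modality [X]φ as an abbreviation. -/
noncomputable def cpBox [DecidableEq Atm] [Inhabited Val] (X : Finset Atm) (φ : Form Atm Val) :
    Form Atm Val :=
  bigAnd (X.powerset.val.toList.map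
    (fun Y => (cnOn Y X).impl (.boxI ((cnOn Y X).impl φ))))

/-- The dual ⟨X⟩φ. -/
noncomputable def cpDia [DecidableEq Atm] [Inhabited Val] (X : Finset Atm) (φ : Form Atm Val) :
    Form Atm Val := .neg (cpBox X (.neg φ))

/-- A term: a consistent conjunction of literals. -/
structure Term (Atm : Type) where
  pos : Finset Atm
  negs : Finset Atm
  disj : Disjoint pos negs

def Term.atoms [DecidableEq Atm] (t : Term Atm) : Finset Atm := t.pos ∪ t.negs

/-- The formula expressed by a term. -/
noncomputable def Term.form [Inhabited Val] (t : Term Atm) : Form Atm Val :=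
  .and (bigAnd (t.pos.val.toList.map Form.atom))
       (bigAnd (t.negs.val.toList.map (fun p => .neg (.atom p))))

/-- PImp(λ,x): λ is a prime implicant for the classification x. -/
noncomputable def PImp [DecidableEq Atm] [Inhabited Val] (t : Term Atm) (x : Val) : Form Atm Val :=
  .boxI ((t.form).impl (.and (.dec x)
    (bigAnd (t.atoms.val.toList.map
      (fun p => cpDia (t.atoms.erase p) (.neg (.dec x)))))))

/-- AXp(λ,x): λ is an abductive explanation of the actual classification x. -/
noncomputable def AXp [DecidableEq Atm] [Inhabited Val] (t : Term Atm) (x : Val) : Form Atm Val :=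
  .and t.form (PImp t x)

/-- The four paper features: significance, originality, clarity, anonymity. -/
inductive PAtm : Type
  | si | orig | cl | an
deriving DecidableEq

/-- The set of input instances: all paper profiles. -/
def exS : Set (Set PAtm) := Set.univ

/-- The set of admissible classifiers: those satisfying the three constraints. -/
def exPhi : Set ((Set PAtm) → Fin 2) :=
  {f | (∀ s, ({PAtm.si, PAtm.orig, PAtm.cl, PAtm.an} : Set PAtm) ⊆ s → f s = 1) ∧
       (∀ s s' : Set PAtm, s ⊂ s' → f s = 1 → f s' = 1) ∧
       (∀ s, PAtm.an ∉ s → f s = 0)}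

/-- The actual instance s₁ = {si, or, an}. -/
def exs1 : Set PAtm := {PAtm.si, PAtm.orig, PAtm.an}

open Classical in
/-- The classifier f₁: accept iff anonymous and (original or clear). -/
noncomputable def exf1 : Set PAtm → Fin 2 :=
  fun s => if PAtm.an ∈ s ∧ (PAtm.orig ∈ s ∨ PAtm.cl ∈ s) then 1 else 0

/-! A subjective explanation `t` of `f₁(s₁) = 1` must be a prime implicant of every classifier
in Φ at once. Evaluating at the least state satisfying `t` (its positive atoms), `f₁` forces `an`
and `orig` into `t` (as `cl ∉ s₁`), while the classifier `f₂ = [si ∧ an] ∈ Φ` forces `si`. But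
then `orig` is redundant for `f₂`: every state agreeing with `t` on its other atoms contains `si`
and `an`, so `t` is not a prime implicant of `f₂`. -/

def Term.Holds (t : Term Atm) (s : Set Atm) : Prop :=
  (t.pos : Set Atm) ⊆ s ∧ Disjoint (t.negs : Set Atm) s

theorem Term.holds_pos (t : Term Atm) : t.Holds t.pos :=
  ⟨subset_rfl, Finset.disjoint_coe.2 t.disj.symm⟩

def Term.IsPrimeImplicant [DecidableEq Atm] (S : Set (Set Atm)) (f : Set Atm → Val)
    (t : Term Atm) (x : Val) : Prop :=
  ∀ s ∈ S, t.Holds s → f s = x ∧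
    ∀ p ∈ t.atoms, ∃ s' ∈ S, (∀ q ∈ t.atoms.erase p, q ∈ s' ↔ q ∈ s) ∧ f s' ≠ x

section Semantics

variable {S : Set (Set Atm)} {Φ : Set (Set Atm → Val)} {s : Set Atm} {f : Set Atm → Val}

theorem sat_impl {φ ψ : Form Atm Val} :
    Sat S Φ s f (φ.impl ψ) ↔ (Sat S Φ s f φ → Sat S Φ s f ψ) := by
  simp only [Form.impl, Sat, not_and, not_not]

variable [Inhabited Val]

theorem sat_tru : Sat S Φ s f (Form.tru : Form Atm Val) := by
  simp [Form.tru, Sat]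

theorem sat_bigAnd {l : List (Form Atm Val)} :
    Sat S Φ s f (bigAnd l) ↔ ∀ φ ∈ l, Sat S Φ s f φ := by
  induction l with
  | nil => simpa [bigAnd] using sat_tru
  | cons φ l ih =>
    simp only [bigAnd, List.foldr_cons, List.forall_mem_cons] at ih ⊢
    rw [← ih]
    rfl

theorem Term.sat_form {t : Term Atm} : Sat S Φ s f (t.form : Form Atm Val) ↔ t.Holds s := by
  simp only [Term.form, Sat, sat_bigAnd, List.forall_mem_map, Multiset.mem_toList,
    Finset.mem_val, Term.Holds, Set.subset_def, Finset.mem_coe, Set.disjoint_left]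

variable [DecidableEq Atm]

theorem sat_cnOn {Y X : Finset Atm} :
    Sat S Φ s f (cnOn Y X : Form Atm Val) ↔ ∀ p ∈ X, (p ∈ Y ↔ p ∈ s) := by
  simp only [cnOn, sat_bigAnd, List.forall_mem_map, Multiset.mem_toList, Finset.mem_val]
  refine forall₂_congr fun p _ => ?_
  by_cases hp : p ∈ Y <;> simp [hp, Sat]

theorem sat_cpBox {X : Finset Atm} {φ : Form Atm Val} :
    Sat S Φ s f (cpBox X φ) ↔ ∀ s' ∈ S, (∀ p ∈ X, p ∈ s' ↔ p ∈ s) → Sat S Φ s' f φ := by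
  classical
  simp only [cpBox, sat_bigAnd, List.forall_mem_map, Multiset.mem_toList, Finset.mem_val,
    Finset.mem_powerset, sat_impl, Sat, sat_cnOn]
  constructor
  · -- instantiate the conjunct whose pattern `cn(Y,X)` is the one realised at `s`
    intro h s' hs' hagree
    refine h (X.filter (· ∈ s)) (Finset.filter_subset _ _) (by simp +contextual) s' hs' ?_
    simp +contextual [hagree]
  · intro h Y _ hY s' hs' hY'
    exact h s' hs' fun p hp => (hY' p hp).symm.trans (hY p hp)

theorem sat_cpDia {X : Finset Atm} {φ : Form Atm Val} :
    Sat S Φ s f (cpDia X φ) ↔ ∃ s' ∈ S, (∀ p ∈ X, p ∈ s' ↔ p ∈ s) ∧ Sat S Φ s' f φ := by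
  simp only [cpDia, Sat, sat_cpBox, not_forall, not_not, exists_prop]

theorem sat_PImp {t : Term Atm} {x : Val} :
    Sat S Φ s f (PImp t x) ↔ t.IsPrimeImplicant S f x := by
  simp only [PImp, Sat, sat_impl, Term.sat_form, sat_bigAnd, List.forall_mem_map,
    Multiset.mem_toList, Finset.mem_val, sat_cpDia, Term.IsPrimeImplicant]

theorem sat_AXp {t : Term Atm} {x : Val} :
    Sat S Φ s f (AXp t x) ↔ t.Holds s ∧ t.IsPrimeImplicant S f x := by
  rw [AXp, Sat, Term.sat_form, sat_PImp]

end Semantics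

open Classical in
noncomputable def exf2 : Set PAtm → Fin 2 :=
  fun s => if PAtm.si ∈ s ∧ PAtm.an ∈ s then 1 else 0

theorem exf1_eq_one {s : Set PAtm} :
    exf1 s = 1 ↔ PAtm.an ∈ s ∧ (PAtm.orig ∈ s ∨ PAtm.cl ∈ s) := by
  unfold exf1; split_ifs <;> simp_all

theorem exf2_eq_one {s : Set PAtm} : exf2 s = 1 ↔ PAtm.si ∈ s ∧ PAtm.an ∈ s := by
  unfold exf2; split_ifs <;> simp_all

theorem exf1_mem_exPhi : exf1 ∈ exPhi := by
  refine ⟨fun s hs => ?_, fun s s' hss h => ?_, fun s hs => ?_⟩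
  · exact exf1_eq_one.2 ⟨hs (by simp), Or.inl (hs (by simp))⟩
  · obtain ⟨han, hoc⟩ := exf1_eq_one.1 h
    exact exf1_eq_one.2 ⟨hss.1 han, hoc.imp (hss.1 ·) (hss.1 ·)⟩
  · simp [exf1, hs]

theorem exf2_mem_exPhi : exf2 ∈ exPhi := by
  refine ⟨fun s hs => ?_, fun s s' hss h => ?_, fun s hs => ?_⟩
  · exact exf2_eq_one.2 ⟨hs (by simp), hs (by simp)⟩
  · obtain ⟨hsi, han⟩ := exf2_eq_one.1 h
    exact exf2_eq_one.2 ⟨hss.1 hsi, hss.1 han⟩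
  · simp [exf2, hs]

theorem not_isPrimeImplicant_exf2 {t : Term PAtm} (hs₁ : t.Holds exs1)
    (h₁ : t.IsPrimeImplicant exS exf1 1) : ¬ t.IsPrimeImplicant exS exf2 1 := by
  intro h₂
  have hcl : PAtm.cl ∉ t.pos := fun h => by simpa [exs1] using hs₁.1 h
  obtain ⟨han, horig⟩ : PAtm.an ∈ t.pos ∧ PAtm.orig ∈ t.pos := by
    simpa [exf1_eq_one, hcl] using (h₁ _ trivial t.holds_pos).1
  obtain ⟨hval, hmin⟩ := h₂ _ trivial t.holds_pos
  have hsi : PAtm.si ∈ t.pos := by simpa using (exf2_eq_one.1 hval).1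
  obtain ⟨s', -, hagree, hne⟩ := hmin PAtm.orig (Finset.mem_union_left _ horig)
  have hkept : ∀ p ∈ t.pos, p ≠ PAtm.orig → p ∈ s' := fun p hp hpo =>
    (hagree p (Finset.mem_erase.2 ⟨hpo, Finset.mem_union_left _ hp⟩)).2 (Finset.mem_coe.2 hp)
  exact hne (exf2_eq_one.2 ⟨hkept _ hsi (by decide), hkept _ han (by decide)⟩)

/-- subjective abductive explanations can fail to exist: f₁ belongs
to Φ, yet no term is a subjective abductive explanation of f₁(s₁) = 1. -/
theorem no_subjective_axp :
    exf1 ∈ exPhi ∧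
      ¬ ∃ t : Term PAtm, Sat exS exPhi exs1 exf1 (.boxF (AXp t 1)) := by
  refine ⟨exf1_mem_exPhi, fun ⟨t, ht⟩ => ?_⟩
  obtain ⟨hs₁, h₁⟩ := sat_AXp.1 (ht exf1 exf1_mem_exPhi)
  exact not_isPrimeImplicant_exf2 hs₁ h₁ (sat_AXp.1 (ht exf2 exf2_mem_exPhi)).2
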